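/- arXiv:2604.05956 — 2 statements merged into one kernel-verified Lean document; each statement's English description precedes it below -/
import Mathlib

section
/- Let n ≥ 2, 1 ≤ k ≤ n−1, and let I = (i₁ < ⋯ < i_k) be a strictly increasing k-tuple with entries in {1,…,n−1}. Then I ∈ 𝓘_k^max(n−1) if and only if i_k ≤ n−2 and i_{r+1} − i_r ≥ 2 for every 1 ≤ r ≤ k−1. -/
open MvPolynomial

/-- The Lee–Szczarba ideal `I(n)` of `F₂[x₁,…,x_{n−1}]`, generated by
`xᵢ² + xᵢ·xᵢ₊₁` for `1 ≤ i ≤ n−2` together with `x_{n−1}²`.  Here `m = n − 1` is the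
number of variables, and the variable `x_{i+1}` (1-based) is `X i` for `i : Fin m`. -/
noncomputable def lsIdeal (m : ℕ) : Ideal (MvPolynomial (Fin m) (ZMod 2)) :=
  Ideal.span
    ({q | ∃ i j : Fin m, (j : ℕ) = (i : ℕ) + 1 ∧ q = X i ^ 2 + X i * X j} ∪
     {q | ∃ i : Fin m, (i : ℕ) = m - 1 ∧ q = X i ^ 2})

/-- `x_I`: the squarefree monomial associated to a tuple `I` (given as a map
`Fin k → Fin m` of variable indices). -/
noncomputable def xMon {m k : ℕ} (I : Fin k → Fin m) : MvPolynomial (Fin m) (ZMod 2) :=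
  ∏ j : Fin k, X (I j)

/-- The lexicographic order on `k`-tuples: `J ⪯ I` iff `J = I` or `J r < I r` at the
first index `r` where they differ. -/
def lexLe {m k : ℕ} (J I : Fin k → Fin m) : Prop :=
  J = I ∨ ∃ r : Fin k, (∀ s : Fin k, s < r → J s = I s) ∧ J r < I r

/-- The set `𝓘_k^max(m)`: strictly increasing `k`-tuples `I` with entries among the `m`
variables such that `x_I² ≠ 0` in `F₂[x₁,…,x_m]/I(m+1)` and `J ⪯ I` for every strictly
increasing `k`-tuple `J` with `x_J² = x_I²` in the quotient. -/
noncomputable def Imax (m k : ℕ) : Set (Fin k → Fin m) :=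
  {I | StrictMono I ∧
    Ideal.Quotient.mk (lsIdeal m) (xMon I ^ 2) ≠ 0 ∧
    ∀ J : Fin k → Fin m, StrictMono J →
      Ideal.Quotient.mk (lsIdeal m) (xMon J ^ 2) =
        Ideal.Quotient.mk (lsIdeal m) (xMon I ^ 2) →
      lexLe J I}

section LS

open Finset

variable {m : ℕ}


variable {m : ℕ}

/-- Cumulative count below `u` of exponent vector `f`. -/
def Ff (m : ℕ) (f : Fin m → ℕ) (u : ℕ) : ℕ := ∑ v : Fin m, if (v : ℕ) < u then f v else 0

/-- Parking prefix function: `H f t = min_{u ≤ t} (Ff f u + (t - u))`. -/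
def Hf (m : ℕ) (f : Fin m → ℕ) (t : ℕ) : ℕ :=
  (Finset.range (t+1)).inf' ⟨0, by simp⟩ (fun u => Ff m f u + (t - u))

def degf (m : ℕ) (f : Fin m → ℕ) : ℕ := ∑ v : Fin m, f v

def Sfin (m : ℕ) (f : Fin m → ℕ) : Finset (Fin m) :=
  Finset.univ.filter (fun v => Hf m f ((v:ℕ)+1) = Hf m f (v:ℕ) + 1)

lemma Ff_mono (f : Fin m → ℕ) {u u' : ℕ} (h : u ≤ u') : Ff m f u ≤ Ff m f u' := by
  apply Finset.sum_le_sum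
  intro v _
  by_cases hv : (v:ℕ) < u
  · simp [hv, lt_of_lt_of_le hv h]
  · simp only [hv, if_false]; positivity

lemma Ff_le_deg (f : Fin m → ℕ) (u : ℕ) : Ff m f u ≤ degf m f := by
  apply Finset.sum_le_sum
  intro v _
  split <;> simp

lemma Ff_eq_deg (f : Fin m → ℕ) {u : ℕ} (h : m ≤ u) : Ff m f u = degf m f := by
  apply Finset.sum_congr rfl
  intro v _
  have : (v:ℕ) < u := lt_of_lt_of_le v.isLt h
  simp [this]

lemma Ff_succ (f : Fin m → ℕ) {u : ℕ} (hu : u < m) :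
    Ff m f (u+1) = Ff m f u + f ⟨u, hu⟩ := by
  have : Ff m f (u+1) = ∑ v : Fin m, ((if (v:ℕ) < u then f v else 0) + (if v = ⟨u, hu⟩ then f v else 0)) := by
    apply Finset.sum_congr rfl
    intro v _
    rcases lt_trichotomy (v:ℕ) u with h | h | h
    · have hne : v ≠ ⟨u, hu⟩ := by intro hv; rw [hv] at h; simp at h
      simp [h, Nat.lt_succ_of_lt h, hne]
    · have hv : v = ⟨u, hu⟩ := Fin.ext h
      simp [hv]
    · have h1 : ¬ (v:ℕ) < u := by omega
      have h2 : ¬ (v:ℕ) < u + 1 := by omega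
      have hne : v ≠ ⟨u, hu⟩ := by intro hv; rw [hv] at h; simp at h
      simp [h1, h2, hne]
  rw [this, Finset.sum_add_distrib]
  congr 1
  rw [Finset.sum_ite_eq' Finset.univ (⟨u, hu⟩ : Fin m) f]
  simp

lemma Ff_succ_ge (f : Fin m → ℕ) {u : ℕ} (hu : m ≤ u) : Ff m f (u+1) = Ff m f u := by
  apply Finset.sum_congr rfl
  intro v _
  have h1 : (v:ℕ) < u := lt_of_lt_of_le v.isLt hu
  simp [h1, Nat.lt_succ_of_lt h1]

lemma Hf_le (f : Fin m → ℕ) {u t : ℕ} (h : u ≤ t) : Hf m f t ≤ Ff m f u + (t - u) :=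
  Finset.inf'_le _ (by simp [Nat.lt_succ_of_le h])

lemma le_Hf (f : Fin m → ℕ) {c t : ℕ} (h : ∀ u ≤ t, c ≤ Ff m f u + (t - u)) :
    c ≤ Hf m f t := by
  apply Finset.le_inf'
  intro u hu
  exact h u (Nat.lt_succ_iff.mp (Finset.mem_range.mp hu))

lemma Hf_zero (f : Fin m → ℕ) : Hf m f 0 = 0 := by
  have h1 := Hf_le f (u := 0) (t := 0) le_rfl
  have h2 : Ff m f 0 = 0 := by
    unfold Ff; apply Finset.sum_eq_zero; intro v _; simp
  omega

lemma Hf_succ_le (f : Fin m → ℕ) (t : ℕ) : Hf m f (t+1) ≤ Hf m f t + 1 := by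
  obtain ⟨u, hu, heq⟩ := Finset.exists_mem_eq_inf' (s := Finset.range (t+1)) ⟨0, by simp⟩ (fun u => Ff m f u + (t - u))
  rw [Finset.mem_range] at hu
  have hut : u ≤ t := Nat.lt_succ_iff.mp hu
  have := Hf_le f (u := u) (t := t+1) (by omega)
  have : Ff m f u + (t + 1 - u) = (Ff m f u + (t - u)) + 1 := by omega
  calc Hf m f (t+1) ≤ Ff m f u + (t+1-u) := Hf_le f (by omega)
  _ = Hf m f t + 1 := by rw [this]; rw [Hf]; rw [← heq]

lemma Hf_mono_succ (f : Fin m → ℕ) (t : ℕ) : Hf m f t ≤ Hf m f (t+1) := by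
  apply le_Hf
  intro u hu
  rcases Nat.lt_or_ge u (t+1) with h | h
  · have hut : u ≤ t := by omega
    have := Hf_le f (u := u) (t := t) hut
    omega
  · have hu1 : u = t + 1 := by omega
    subst hu1
    have := Hf_le f (u := t) (t := t) le_rfl
    have hm := Ff_mono f (u := t) (u' := t+1) (by omega)
    omega

lemma Hf_le_Ff (f : Fin m → ℕ) (t : ℕ) : Hf m f t ≤ Ff m f t := by
  have := Hf_le f (u := t) (t := t) le_rfl
  simpa using this

lemma card_Sfin (f : Fin m → ℕ) : ∀ t, t ≤ m →
    ((Sfin m f).filter (fun v : Fin m => (v:ℕ) < t)).card = Hf m f t := by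
  intro t
  induction t with
  | zero => intro _; simp [Hf_zero]
  | succ t ih =>
    intro ht
    have htm : t < m := ht
    have hsplit : (Sfin m f).filter (fun v : Fin m => (v:ℕ) < t + 1) =
        (Sfin m f).filter (fun v : Fin m => (v:ℕ) < t) ∪ (Sfin m f).filter (fun v : Fin m => (v:ℕ) = t) := by
      rw [← Finset.filter_or]
      apply Finset.filter_congr
      intro v _
      constructor
      · intro h; omega
      · intro h; omega
    rw [hsplit, Finset.card_union_of_disjoint]
    · rw [ih (by omega)]
      have hs1 := Hf_succ_le f t
      have hs2 := Hf_mono_succ f t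
      by_cases hv : (⟨t, htm⟩ : Fin m) ∈ Sfin m f
      · have hcard : (Sfin m f).filter (fun v : Fin m => (v:ℕ) = t) = {⟨t, htm⟩} := by
          apply Finset.eq_singleton_iff_unique_mem.mpr
          constructor
          · simp only [Finset.mem_filter]; exact ⟨hv, by simp⟩
          · intro v hv'
            simp only [Finset.mem_filter] at hv'
            exact Fin.ext hv'.2
        rw [hcard]
        simp only [Finset.card_singleton]
        have : Hf m f (t+1) = Hf m f t + 1 := by
          have := (Finset.mem_filter.mp hv).2
          simpa using this
        omega
      · have hcard : (Sfin m f).filter (fun v : Fin m => (v:ℕ) = t) = ∅ := by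
          apply Finset.filter_eq_empty_iff.mpr
          intro v hv'
          intro hvt
          exact hv (by rwa [show (⟨t, htm⟩ : Fin m) = v from (Fin.ext hvt.symm)])
        rw [hcard]
        have hnot : ¬ (Hf m f (t+1) = Hf m f t + 1) := by
          intro h
          apply hv
          simp only [Sfin, Finset.mem_filter, Finset.mem_univ, true_and]
          exact h
        simp only [Finset.card_empty, add_zero]
        omega
    · rw [Finset.disjoint_left]
      intro v h1 h2
      simp only [Finset.mem_filter] at h1 h2
      omega

/-- Squarefree case: `Hf = Ff`. -/
lemma Hf_of_squarefree (f : Fin m → ℕ) (hf : ∀ v, f v ≤ 1) (t : ℕ) :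
    Hf m f t = Ff m f t := by
  apply le_antisymm (Hf_le_Ff f t)
  apply le_Hf
  intro u hu
  have key : ∀ d, Ff m f (u + d) ≤ Ff m f u + d := by
    intro d
    induction d with
    | zero => simp
    | succ d ih =>
      by_cases h : u + d < m
      · rw [show u + (d+1) = (u+d) + 1 by ring, Ff_succ f h]
        have := hf ⟨u + d, h⟩
        omega
      · rw [show u + (d+1) = (u+d) + 1 by ring, Ff_succ_ge f (by omega)]
        omega
  have := key (t - u)
  rw [show u + (t - u) = t by omega] at this
  omega

def dlt (m : ℕ) (i : Fin m) (c : ℕ) : Fin m → ℕ := fun v => if i = v then c else 0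

lemma Ff_add (f g : Fin m → ℕ) (u : ℕ) :
    Ff m (fun v => f v + g v) u = Ff m f u + Ff m g u := by
  unfold Ff
  rw [← Finset.sum_add_distrib]
  apply Finset.sum_congr rfl
  intro v _
  split <;> simp

lemma Ff_dlt (i : Fin m) (c : ℕ) (u : ℕ) :
    Ff m (dlt m i c) u = if (i:ℕ) < u then c else 0 := by
  unfold Ff dlt
  have : ∀ v : Fin m, (if (v:ℕ) < u then (if i = v then c else 0) else 0)
      = if i = v then (if (v:ℕ) < u then c else 0) else 0 := by
    intro v
    by_cases h1 : (v:ℕ) < u <;> by_cases h2 : i = v <;> simp [h1, h2]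
  rw [Finset.sum_congr rfl (fun v _ => this v),
    Finset.sum_ite_eq Finset.univ i (fun v => if (v:ℕ) < u then c else 0)]
  simp

lemma degf_add (f g : Fin m → ℕ) :
    degf m (fun v => f v + g v) = degf m f + degf m g := by
  unfold degf
  rw [← Finset.sum_add_distrib]

lemma degf_dlt (i : Fin m) (c : ℕ) : degf m (dlt m i c) = c := by
  unfold degf dlt
  simp [Finset.sum_ite_eq]

/-- Key exchange: pushing `x_i² → x_i x_{i+1}` does not change the parking profile. -/
lemma Hf_exchange (f : Fin m → ℕ) (i j : Fin m) (hj : (j:ℕ) = (i:ℕ) + 1) (t : ℕ) :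
    Hf m (fun v => f v + dlt m i 2 v) t = Hf m (fun v => f v + dlt m i 1 v + dlt m j 1 v) t := by
  have hFA : ∀ u, Ff m (fun v => f v + dlt m i 2 v) u
      = Ff m f u + (if (i:ℕ) < u then 2 else 0) := by
    intro u; rw [Ff_add, Ff_dlt]
  have hFB : ∀ u, Ff m (fun v => f v + dlt m i 1 v + dlt m j 1 v) u
      = Ff m f u + (if (i:ℕ) < u then 1 else 0) + (if (j:ℕ) < u then 1 else 0) := by
    intro u
    rw [show (fun v => f v + dlt m i 1 v + dlt m j 1 v)
        = (fun v => (f v + dlt m i 1 v) + dlt m j 1 v) from rfl, Ff_add, Ff_add, Ff_dlt, Ff_dlt]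
  apply le_antisymm
  · -- every B-term dominates some A-term
    apply le_Hf
    intro u hu
    by_cases hcase : u = (i:ℕ) + 1
    · -- compare with the A-term at i
      have h1 : Hf m (fun v => f v + dlt m i 2 v) t ≤ Ff m f (i:ℕ) + (t - (i:ℕ)) := by
        have := Hf_le (fun v => f v + dlt m i 2 v) (u := (i:ℕ)) (t := t) (by omega)
        rw [hFA] at this
        simpa using this
      rw [hFB]
      have hiu : (i:ℕ) < u := by omega
      have hju : ¬ (j:ℕ) < u := by omega
      simp only [hiu, hju, if_true, if_false]
      have hmono := Ff_mono f (u := (i:ℕ)) (u' := u) (by omega)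
      omega
    · rw [hFB]
      have h1 : Hf m (fun v => f v + dlt m i 2 v) t ≤
          Ff m f u + (if (i:ℕ) < u then 2 else 0) + (t - u) := by
        have := Hf_le (fun v => f v + dlt m i 2 v) (u := u) (t := t) hu
        rw [hFA] at this
        omega
      by_cases hiu : (i:ℕ) < u
      · have hju : (j:ℕ) < u := by omega
        simp only [hiu, hju, if_true] at *
        omega
      · have hju : ¬ (j:ℕ) < u := by omega
        simp only [hiu, hju, if_false] at *
        omega
  · -- A-terms dominate B-terms pointwise
    apply le_Hf
    intro u hu
    have h1 : Hf m (fun v => f v + dlt m i 1 v + dlt m j 1 v) t ≤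
        Ff m f u + (if (i:ℕ) < u then 1 else 0) + (if (j:ℕ) < u then 1 else 0) + (t - u) := by
      have := Hf_le (fun v => f v + dlt m i 1 v + dlt m j 1 v) (u := u) (t := t) hu
      rw [hFB] at this
      omega
    rw [hFA]
    by_cases hiu : (i:ℕ) < u <;> by_cases hju : (j:ℕ) < u <;>
      simp only [hiu, hju, if_true, if_false] at h1 ⊢ <;> omega

noncomputable def N0 (m : ℕ) (f : Fin m → ℕ) : (Finset (Fin m)) →₀ ZMod 2 :=
  if Hf m f m = degf m f then Finsupp.single (Sfin m f) 1 else 0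

lemma N0_exchange (f : Fin m → ℕ) (i j : Fin m) (hj : (j:ℕ) = (i:ℕ) + 1) :
    N0 m (fun v => f v + dlt m i 2 v) = N0 m (fun v => f v + dlt m i 1 v + dlt m j 1 v) := by
  have hH : Hf m (fun v => f v + dlt m i 2 v) = Hf m (fun v => f v + dlt m i 1 v + dlt m j 1 v) :=
    funext (Hf_exchange f i j hj)
  have hdeg : degf m (fun v => f v + dlt m i 2 v)
      = degf m (fun v => f v + dlt m i 1 v + dlt m j 1 v) := by
    rw [degf_add, show (fun v => f v + dlt m i 1 v + dlt m j 1 v)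
        = (fun v => (f v + dlt m i 1 v) + dlt m j 1 v) from rfl, degf_add, degf_add,
      degf_dlt, degf_dlt, degf_dlt]
  unfold N0 Sfin
  rw [hH, hdeg]

lemma N0_top (f : Fin m → ℕ) (i : Fin m) (hi : (i:ℕ) = m - 1) :
    N0 m (fun v => f v + dlt m i 2 v) = 0 := by
  have hm : 1 ≤ m := i.pos
  have hlt : Hf m (fun v => f v + dlt m i 2 v) m < degf m (fun v => f v + dlt m i 2 v) := by
    have h1 : Hf m (fun v => f v + dlt m i 2 v) m ≤
        Ff m (fun v => f v + dlt m i 2 v) (m-1) + (m - (m-1)) :=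
      Hf_le _ (by omega)
    have h2 : Ff m (fun v => f v + dlt m i 2 v) (m-1) = Ff m f (m-1) := by
      rw [Ff_add, Ff_dlt]
      have : ¬ (i:ℕ) < m - 1 := by omega
      simp [this]
    have h3 : Ff m f (m-1) ≤ degf m f := Ff_le_deg f _
    have h4 : degf m (fun v => f v + dlt m i 2 v) = degf m f + 2 := by
      rw [degf_add, degf_dlt]
    omega
  unfold N0
  rw [if_neg (by omega)]

lemma N0_squarefree (f : Fin m → ℕ) (hf : ∀ v, f v ≤ 1) :
    N0 m f = Finsupp.single (Finset.univ.filter (fun v : Fin m => f v = 1)) 1 := by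
  have hH : ∀ t, Hf m f t = Ff m f t := Hf_of_squarefree f hf
  have hfit : Hf m f m = degf m f := by rw [hH, Ff_eq_deg f le_rfl]
  unfold N0
  rw [if_pos hfit]
  congr 1
  unfold Sfin
  apply Finset.filter_congr
  intro v _
  rw [hH, hH, Ff_succ f v.isLt]
  have hv := hf v
  constructor
  · intro h
    have : f ⟨(v:ℕ), v.isLt⟩ = 1 := by omega
    simpa using this
  · intro h
    have : f ⟨(v:ℕ), v.isLt⟩ = 1 := by simpa using h
    omega


lemma coe_add_single (g : Fin m →₀ ℕ) (i : Fin m) (c : ℕ) :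
    ⇑(g + Finsupp.single i c) = fun v => g v + dlt m i c v := by
  funext v
  simp [Finsupp.single_apply, dlt]

lemma coe_add_single2 (g : Fin m →₀ ℕ) (i j : Fin m) (c d : ℕ) :
    ⇑(g + Finsupp.single i c + Finsupp.single j d)
      = fun v => g v + dlt m i c v + dlt m j d v := by
  funext v
  simp [Finsupp.single_apply, dlt]

noncomputable def Nmap (m : ℕ) :
    MvPolynomial (Fin m) (ZMod 2) →ₗ[ZMod 2] ((Finset (Fin m)) →₀ ZMod 2) :=
  (MvPolynomial.basisMonomials (Fin m) (ZMod 2)).constr (ZMod 2) (fun g => N0 m ⇑g)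

lemma Nmap_monomial (g : Fin m →₀ ℕ) (c : ZMod 2) :
    Nmap m (monomial g c) = c • N0 m ⇑g := by
  have h1 : (monomial g c : MvPolynomial (Fin m) (ZMod 2)) = c • monomial g 1 := by
    rw [MvPolynomial.smul_monomial, smul_eq_mul, mul_one]
  rw [h1, map_smul]
  congr 1
  have h2 : (monomial g 1 : MvPolynomial (Fin m) (ZMod 2))
      = MvPolynomial.basisMonomials (Fin m) (ZMod 2) g := by
    rw [coe_basisMonomials]
  rw [h2, Nmap, Module.Basis.constr_basis]

lemma Nmap_mul_genA (r : MvPolynomial (Fin m) (ZMod 2)) (i j : Fin m)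
    (hj : (j : ℕ) = (i : ℕ) + 1) : Nmap m (r * (X i ^ 2 + X i * X j)) = 0 := by
  conv_lhs => rw [MvPolynomial.as_sum r]
  rw [Finset.sum_mul, map_sum]
  apply Finset.sum_eq_zero
  intro g _
  rw [mul_add, map_add]
  have hXi2 : (X i ^ 2 : MvPolynomial (Fin m) (ZMod 2)) = monomial (Finsupp.single i 2) 1 :=
    MvPolynomial.X_pow_eq_monomial
  have hXiXj : (X i * X j : MvPolynomial (Fin m) (ZMod 2))
      = monomial (Finsupp.single i 1 + Finsupp.single j 1) 1 := by
    rw [MvPolynomial.X, MvPolynomial.X, MvPolynomial.monomial_mul, mul_one]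
  rw [hXi2, hXiXj, MvPolynomial.monomial_mul, MvPolynomial.monomial_mul]
  simp only [mul_one]
  rw [← add_assoc, Nmap_monomial, Nmap_monomial]
  rw [coe_add_single, coe_add_single2, N0_exchange g i j hj, ← add_smul]
  have : MvPolynomial.coeff g r + MvPolynomial.coeff g r = 0 := by
    have := CharTwo.add_self_eq_zero (R := ZMod 2) (MvPolynomial.coeff g r)
    exact this
  rw [this, zero_smul]

lemma Nmap_mul_genB (r : MvPolynomial (Fin m) (ZMod 2)) (i : Fin m)
    (hi : (i : ℕ) = m - 1) : Nmap m (r * X i ^ 2) = 0 := by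
  conv_lhs => rw [MvPolynomial.as_sum r]
  rw [Finset.sum_mul, map_sum]
  apply Finset.sum_eq_zero
  intro g _
  rw [MvPolynomial.X_pow_eq_monomial, MvPolynomial.monomial_mul, mul_one, Nmap_monomial,
    coe_add_single, N0_top g i hi, smul_zero]

lemma Nmap_zero_of_mem (p : MvPolynomial (Fin m) (ZMod 2)) (hp : p ∈ lsIdeal m) :
    Nmap m p = 0 := by
  rw [lsIdeal, Ideal.span] at hp
  obtain ⟨c, hsupp, hsum⟩ := Submodule.mem_span_set.mp hp
  rw [← hsum, map_finsuppSum]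
  apply Finset.sum_eq_zero
  intro a ha
  have hmem := hsupp (Finset.mem_coe.mpr ha)
  show (Nmap m) (c a • a) = 0
  rw [smul_eq_mul]
  rcases hmem with ⟨i, j, hj, rfl⟩ | ⟨i, hi, rfl⟩
  · exact Nmap_mul_genA _ i j hj
  · exact Nmap_mul_genB _ i hi

lemma Nmap_congr {p q : MvPolynomial (Fin m) (ZMod 2)}
    (h : Ideal.Quotient.mk (lsIdeal m) p = Ideal.Quotient.mk (lsIdeal m) q) :
    Nmap m p = Nmap m q := by
  have : p - q ∈ lsIdeal m := Ideal.Quotient.eq.mp h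
  have h0 := Nmap_zero_of_mem _ this
  rw [map_sub] at h0
  exact sub_eq_zero.mp h0

lemma mk_relA (i j : Fin m) (hj : (j : ℕ) = (i : ℕ) + 1) :
    Ideal.Quotient.mk (lsIdeal m) (X i ^ 2) = Ideal.Quotient.mk (lsIdeal m) (X i * X j) := by
  rw [Ideal.Quotient.eq]
  have : (X i ^ 2 - X i * X j : MvPolynomial (Fin m) (ZMod 2)) = X i ^ 2 + X i * X j := by
    rw [CharTwo.sub_eq_add]
  rw [this]
  apply Ideal.subset_span
  exact Or.inl ⟨i, j, hj, rfl⟩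

lemma mk_relB (i : Fin m) (hi : (i : ℕ) = m - 1) :
    Ideal.Quotient.mk (lsIdeal m) (X i ^ 2) = 0 := by
  rw [Ideal.Quotient.eq_zero_iff_mem]
  apply Ideal.subset_span
  exact Or.inr ⟨i, hi, rfl⟩

lemma mk_relC (a b c : Fin m) (hb : (b : ℕ) = (a : ℕ) + 1) (hc : (c : ℕ) = (b : ℕ) + 1) :
    Ideal.Quotient.mk (lsIdeal m) (X a ^ 2 * X b ^ 2)
      = Ideal.Quotient.mk (lsIdeal m) (X a ^ 2 * X c ^ 2) := by
  have hA := mk_relA a b hb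
  have hB := mk_relA b c hc
  calc Ideal.Quotient.mk (lsIdeal m) (X a ^ 2 * X b ^ 2)
      = Ideal.Quotient.mk (lsIdeal m) (X a ^ 2) * Ideal.Quotient.mk (lsIdeal m) (X b ^ 2) := by
        rw [map_mul]
    _ = Ideal.Quotient.mk (lsIdeal m) (X a * X b) * Ideal.Quotient.mk (lsIdeal m) (X b * X c) := by
        rw [hA, hB]
    _ = Ideal.Quotient.mk (lsIdeal m) (X a * X c) * Ideal.Quotient.mk (lsIdeal m) (X b ^ 2) := by
        rw [← map_mul, ← map_mul]; ring_nf
    _ = Ideal.Quotient.mk (lsIdeal m) (X a * X c) * Ideal.Quotient.mk (lsIdeal m) (X b * X c) := by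
        rw [hB]
    _ = Ideal.Quotient.mk (lsIdeal m) ((X a * X b) * X c ^ 2) := by
        rw [← map_mul]; ring_nf
    _ = Ideal.Quotient.mk (lsIdeal m) (X a ^ 2 * X c ^ 2) := by
        rw [map_mul, ← hA, ← map_mul]

lemma prodX_eq_monomial (S : Finset (Fin m)) :
    (∏ v ∈ S, X v : MvPolynomial (Fin m) (ZMod 2))
      = monomial (∑ v ∈ S, Finsupp.single v 1) 1 := by
  induction S using Finset.induction_on with
  | empty => simp [MvPolynomial.monomial_eq]
  | @insert _ _ hx ih =>
    rw [Finset.prod_insert hx, Finset.sum_insert hx, ih, MvPolynomial.X,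
      MvPolynomial.monomial_mul, one_mul]

lemma coe_sum_single (S : Finset (Fin m)) :
    ⇑(∑ v ∈ S, Finsupp.single v (1:ℕ)) = fun w => if w ∈ S then 1 else 0 := by
  funext w
  rw [Finsupp.finset_sum_apply]
  by_cases hw : w ∈ S
  · rw [Finset.sum_eq_single w]
    · simp [hw]
    · intro b _ hb
      exact Finsupp.single_eq_of_ne' hb
    · intro h; exact absurd hw h
  · rw [if_neg hw]
    apply Finset.sum_eq_zero
    intro v hv
    apply Finsupp.single_eq_of_ne'
    intro h; exact hw (h ▸ hv)

lemma Nmap_prodX (S : Finset (Fin m)) :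
    Nmap m (∏ v ∈ S, X v) = Finsupp.single S 1 := by
  rw [prodX_eq_monomial, Nmap_monomial, coe_sum_single]
  have h1 : N0 m (fun w => if w ∈ S then 1 else 0) = Finsupp.single S 1 := by
    rw [N0_squarefree _ (by intro v; split <;> simp)]
    congr 1
    ext v
    simp only [Finset.mem_filter, Finset.mem_univ, true_and]
    split <;> simp_all
  rw [h1, one_smul]

lemma xMon_sq {k : ℕ} (I : Fin k → Fin m) : xMon I ^ 2 = ∏ r : Fin k, X (I r) ^ 2 := by
  rw [xMon, ← Finset.prod_pow]

lemma prod_monomial_one {α : Type*} [DecidableEq α] (s : Finset α) (g : α → (Fin m →₀ ℕ)) :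
    (∏ a ∈ s, (monomial (g a) 1 : MvPolynomial (Fin m) (ZMod 2)))
      = monomial (∑ a ∈ s, g a) 1 := by
  induction s using Finset.induction_on with
  | empty => simp [MvPolynomial.monomial_eq]
  | @insert _ _ hx ih =>
    rw [Finset.prod_insert hx, Finset.sum_insert hx, ih, MvPolynomial.monomial_mul, one_mul]

lemma xMon_sq_monomial {k : ℕ} (J : Fin k → Fin m) :
    xMon J ^ 2 = monomial (∑ r : Fin k, Finsupp.single (J r) 2) 1 := by
  rw [xMon_sq]
  have : ∀ r : Fin k, (X (J r) ^ 2 : MvPolynomial (Fin m) (ZMod 2))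
      = monomial (Finsupp.single (J r) 2) 1 := fun r => MvPolynomial.X_pow_eq_monomial
  rw [Finset.prod_congr rfl (fun r _ => this r), prod_monomial_one]

lemma Ff_sum {α : Type*} (s : Finset α) (g : α → Fin m → ℕ) (u : ℕ) :
    Ff m (fun v => ∑ a ∈ s, g a v) u = ∑ a ∈ s, Ff m (g a) u := by
  unfold Ff
  rw [Finset.sum_comm]
  apply Finset.sum_congr rfl
  intro v _
  split
  · rfl
  · simp

lemma coe_sum_single2 {k : ℕ} (J : Fin k → Fin m) :
    ⇑(∑ r : Fin k, Finsupp.single (J r) (2:ℕ)) = fun v => ∑ r : Fin k, dlt m (J r) 2 v := by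
  funext v
  rw [Finsupp.finset_sum_apply]
  apply Finset.sum_congr rfl
  intro r _
  rw [Finsupp.single_apply]
  rfl

lemma Ff_fJ {k : ℕ} (J : Fin k → Fin m) (u : ℕ) :
    Ff m (⇑(∑ r : Fin k, Finsupp.single (J r) (2:ℕ))) u
      = ∑ r : Fin k, (if ((J r : ℕ)) < u then 2 else 0) := by
  rw [coe_sum_single2, Ff_sum]
  apply Finset.sum_congr rfl
  intro r _
  rw [Ff_dlt]

lemma Ff_le_linear (g : Fin m → ℕ) (hg : ∀ v, g v ≤ 2) (u : ℕ) : Ff m g u ≤ 2 * u := by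
  induction u with
  | zero => simp [Ff]
  | succ u ih =>
    by_cases h : u < m
    · rw [Ff_succ g h]
      have := hg ⟨u, h⟩
      omega
    · rw [Ff_succ_ge g (by omega)]
      omega

def iota (m k : ℕ) (I : Fin k → Fin m) (hfit : ∀ r, ((I r):ℕ) + 1 < m) :
    Fin k × Bool → Fin m :=
  fun p => ⟨(I p.1 : ℕ) + (if p.2 then 1 else 0), by
    have := hfit p.1; split <;> omega⟩

lemma iota_val {k : ℕ} (I : Fin k → Fin m) (hfit : ∀ r, ((I r):ℕ) + 1 < m)
    (p : Fin k × Bool) : ((iota m k I hfit p : Fin m) : ℕ) = (I p.1 : ℕ) + (if p.2 then 1 else 0) :=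
  rfl

lemma gap_chain {k : ℕ} (I : Fin k → Fin m)
    (hgap : ∀ r : ℕ, (hr : r + 1 < k) → ((I ⟨r, by omega⟩ : Fin m) : ℕ) + 2 ≤ ((I ⟨r+1, hr⟩ : Fin m) : ℕ)) :
    ∀ (r s : Fin k), r < s → ((I r : Fin m) : ℕ) + 2 ≤ ((I s : Fin m) : ℕ) := by
  have key : ∀ t (ht : t < k) (r : Fin k), (r : ℕ) < t → ((I r : Fin m) : ℕ) + 2 ≤ ((I ⟨t, ht⟩ : Fin m) : ℕ) := by
    intro t
    induction t with
    | zero => intro _ r hr; omega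
    | succ t iht =>
      intro ht r hr
      rcases Nat.lt_or_ge (r : ℕ) t with h | h
      · have h1 := iht (by omega) r h
        have h2 := hgap t ht
        have : I ⟨t, by omega⟩ = I ⟨t, by omega⟩ := rfl
        omega
      · have hrt : (r : ℕ) = t := by omega
        have hre : r = ⟨t, by omega⟩ := Fin.ext hrt
        rw [hre]
        have := hgap t ht
        omega
  intro r s hrs
  have := key (s : ℕ) s.isLt r hrs
  simpa using this

lemma iota_inj {k : ℕ} (I : Fin k → Fin m) (hfit : ∀ r, ((I r):ℕ) + 1 < m)
    (hgap2 : ∀ (r s : Fin k), r < s → ((I r : Fin m) : ℕ) + 2 ≤ ((I s : Fin m) : ℕ)) :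
    Function.Injective (iota m k I hfit) := by
  intro p q hpq
  have hval : (I p.1 : ℕ) + (if p.2 then 1 else 0) = (I q.1 : ℕ) + (if q.2 then 1 else 0) := by
    have := congrArg (fun v : Fin m => (v : ℕ)) hpq
    simpa [iota_val] using this
  rcases lt_trichotomy p.1 q.1 with h | h | h
  · have := hgap2 _ _ h
    exfalso; revert hval; split <;> split <;> omega
  · have hb : p.2 = q.2 := by
      revert hval; rw [h]
      cases p.2 <;> cases q.2 <;> simp <;> omega
      
    exact Prod.ext h hb
  · have := hgap2 _ _ h
    exfalso; revert hval; split <;> split <;> omega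

/-- With gaps ≥ 2 and room at the top, `x_I²` is congruent to the squarefree monomial on
the union of the pairs `{i_r, i_r + 1}`. -/
lemma mk_xMon_sq {k : ℕ} (I : Fin k → Fin m) (hfit : ∀ r, ((I r):ℕ) + 1 < m) :
    Ideal.Quotient.mk (lsIdeal m) (xMon I ^ 2)
      = Ideal.Quotient.mk (lsIdeal m) (∏ p : Fin k × Bool, X (iota m k I hfit p)) := by
  rw [xMon_sq, map_prod, map_prod, Fintype.prod_prod_type]
  apply Finset.prod_congr rfl
  intro r _
  rw [Fintype.prod_bool, ← map_mul]
  have h1 : iota m k I hfit (r, false) = I r := Fin.ext (by simp [iota_val])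
  have h2 : ((iota m k I hfit (r, true) : Fin m) : ℕ) = (I r : ℕ) + 1 := by simp [iota_val]
  rw [h1]
  have := mk_relA (I r) (iota m k I hfit (r, true)) h2
  rw [this]
  congr 1
  ring

lemma Nmap_xMon_sq {k : ℕ} (I : Fin k → Fin m) (hfit : ∀ r, ((I r):ℕ) + 1 < m)
    (hgap2 : ∀ (r s : Fin k), r < s → ((I r : Fin m) : ℕ) + 2 ≤ ((I s : Fin m) : ℕ)) :
    Nmap m (∏ p : Fin k × Bool, X (iota m k I hfit p))
      = Finsupp.single (Finset.image (iota m k I hfit) Finset.univ) 1 := by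
  have hinj := iota_inj I hfit hgap2
  have : (∏ v ∈ Finset.image (iota m k I hfit) Finset.univ, X v :
      MvPolynomial (Fin m) (ZMod 2)) = ∏ p : Fin k × Bool, X (iota m k I hfit p) :=
    Finset.prod_image (fun x _ y _ h => hinj h)
  rw [← this, Nmap_prodX]

lemma pointwise_le {k : ℕ} (I J : Fin k → Fin m)
    (hfit : ∀ r, ((I r):ℕ) + 1 < m)
    (hgap2 : ∀ (r s : Fin k), r < s → ((I r : Fin m) : ℕ) + 2 ≤ ((I s : Fin m) : ℕ))
    (hJ : StrictMono J)
    (hS : Sfin m (⇑(∑ r : Fin k, Finsupp.single (J r) (2:ℕ)))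
      = Finset.image (iota m k I hfit) Finset.univ) :
    ∀ r, ((J r : Fin m) : ℕ) ≤ ((I r : Fin m) : ℕ) := by
  intro r
  by_contra hlt
  push_neg at hlt
  set fJ : Fin m → ℕ := ⇑(∑ r : Fin k, Finsupp.single (J r) (2:ℕ)) with hfJ
  set t : ℕ := ((I r : Fin m) : ℕ) + 1 with ht
  have htm : t ≤ m := le_of_lt (hfit r)
  -- upper bound on the count
  have hub : Hf m fJ t ≤ 2 * (r : ℕ) := by
    calc Hf m fJ t ≤ Ff m fJ t := Hf_le_Ff fJ t
    _ = ∑ s : Fin k, (if ((J s : ℕ)) < t then 2 else 0) := Ff_fJ J t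
    _ ≤ ∑ s : Fin k, (if ((s : ℕ)) < (r:ℕ) then 2 else 0) := by
        apply Finset.sum_le_sum
        intro s _
        by_cases hs : ((J s : ℕ)) < t
        · have hsr : (s:ℕ) < (r:ℕ) := by
            by_contra hge
            push_neg at hge
            have h1 : r ≤ s := Fin.le_def.mpr hge
            have h2 : J r ≤ J s := hJ.le_iff_le.mpr h1
            have h3 : ((J r):ℕ) ≤ ((J s):ℕ) := Fin.le_def.mp h2
            omega
          simp [hs, hsr]
        · simp [hs]
    _ = Ff k (fun _ => 2) (r:ℕ) := by rw [Ff]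
    _ ≤ 2 * (r:ℕ) := Ff_le_linear _ (fun _ => le_rfl) _
  -- lower bound on the count
  have hcount := card_Sfin fJ t htm
  have hlb : 2 * (r : ℕ) + 1 ≤
      ((Sfin m fJ).filter (fun v : Fin m => (v:ℕ) < t)).card := by
    rw [hS]
    have hrk : (r : ℕ) < k := r.isLt
    set g : ℕ → Fin m := fun q =>
      iota m k I hfit (⟨min (q / 2) (r:ℕ), lt_of_le_of_lt (min_le_right _ _) hrk⟩,
        (q % 2 == 1)) with hg
    have hgval : ∀ q, ((g q : Fin m) : ℕ)
        = ((I ⟨min (q / 2) (r:ℕ), lt_of_le_of_lt (min_le_right _ _) hrk⟩ : Fin m) : ℕ)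
          + (if (q % 2 == 1) then 1 else 0) := by
      intro q; rw [hg]; exact iota_val I hfit _
    have hmaps : ∀ q ∈ Finset.range (2 * (r:ℕ) + 1),
        g q ∈ (Finset.image (iota m k I hfit) Finset.univ).filter
          (fun v : Fin m => (v:ℕ) < t) := by
      intro q hq
      rw [Finset.mem_range] at hq
      rw [Finset.mem_filter]
      constructor
      · rw [hg]; exact Finset.mem_image_of_mem _ (Finset.mem_univ _)
      · rw [hgval]
        rcases Nat.lt_or_ge (q / 2) (r:ℕ) with hcase | hcase
        · have hmin : min (q / 2) (r:ℕ) = q / 2 := by omega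
          have hlt2 : (⟨min (q / 2) (r:ℕ), lt_of_le_of_lt (min_le_right _ _) hrk⟩ : Fin k) < r := by
            rw [Fin.lt_def]; simp only; omega
          have := hgap2 _ r hlt2
          split <;> omega
        · have hq2 : q / 2 = (r:ℕ) := by omega
          have hq0 : q % 2 = 0 := by omega
          have hmin : min (q / 2) (r:ℕ) = (r:ℕ) := by omega
          have hre : (⟨min (q / 2) (r:ℕ), lt_of_le_of_lt (min_le_right _ _) hrk⟩ : Fin k) = r :=
            Fin.ext (by simpa using hmin)
          rw [hre, hq0]
          simp
          omega
    have hinjOn : Set.InjOn g (Finset.range (2 * (r:ℕ) + 1)) := by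
      intro q hq q' hq' heq
      simp only [Finset.coe_range, Set.mem_Iio] at hq hq'
      rw [hg] at heq
      have := iota_inj I hfit hgap2 heq
      have h1 : min (q / 2) (r:ℕ) = min (q' / 2) (r:ℕ) := congrArg Fin.val (congrArg Prod.fst this)
      have h2 : (q % 2 == 1) = (q' % 2 == 1) := congrArg Prod.snd this
      have h1' : q / 2 = q' / 2 := by omega
      have h2' : q % 2 = q' % 2 := by
        rcases Nat.mod_two_eq_zero_or_one q with h | h <;>
          rcases Nat.mod_two_eq_zero_or_one q' with h' | h' <;>
          simp [h, h'] at h2 ⊢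
      omega
    have := Finset.card_le_card_of_injOn g hmaps hinjOn
    simpa using this
  omega

lemma Sfin_eq_of_Nmap {k : ℕ} (J : Fin k → Fin m) (S : Finset (Fin m))
    (h : Nmap m (xMon J ^ 2) = Finsupp.single S 1) :
    Sfin m (⇑(∑ r : Fin k, Finsupp.single (J r) (2:ℕ))) = S := by
  rw [xMon_sq_monomial, Nmap_monomial, one_smul] at h
  unfold N0 at h
  split at h
  · exact Finsupp.single_left_injective one_ne_zero h
  · exact absurd (Finsupp.single_eq_zero.mp h.symm) one_ne_zero

lemma lexLe_of_pointwise {k : ℕ} (J I : Fin k → Fin m)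
    (h : ∀ r, ((J r : Fin m) : ℕ) ≤ ((I r : Fin m) : ℕ)) : lexLe J I := by
  by_cases heq : J = I
  · exact Or.inl heq
  · right
    set s := Finset.univ.filter (fun r : Fin k => J r ≠ I r) with hs
    have hsne : s.Nonempty := by
      by_contra hemp
      rw [Finset.not_nonempty_iff_eq_empty] at hemp
      apply heq
      funext r
      by_contra hr
      have : r ∈ s := by rw [hs]; simp [hr]
      rw [hemp] at this
      exact absurd this (Finset.notMem_empty r)
    refine ⟨s.min' hsne, ?_, ?_⟩
    · intro q hq
      by_contra hne
      have hqs : q ∈ s := by rw [hs]; simp [hne]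
      have := Finset.min'_le s q hqs
      exact absurd hq (by omega)
    · have hmem := Finset.min'_mem s hsne
      have hne := (Finset.mem_filter.mp hmem).2
      have hle := h (s.min' hsne)
      have hv : ((J (s.min' hsne) : Fin m) : ℕ) ≠ ((I (s.min' hsne) : Fin m) : ℕ) :=
        fun hv => hne (Fin.ext hv)
      exact Fin.lt_def.mpr (by omega)

lemma not_lexLe {k : ℕ} (J I : Fin k → Fin m)
    (hge : ∀ r, ((I r : Fin m) : ℕ) ≤ ((J r : Fin m) : ℕ)) (hne : J ≠ I) : ¬ lexLe J I := by
  intro h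
  rcases h with h | ⟨r, _, hlt⟩
  · exact hne h
  · rw [Fin.lt_def] at hlt
    have := hge r
    omega

lemma mk_sq_zero_top {k : ℕ} (I : Fin k → Fin m) (r : Fin k) (h : ((I r : Fin m) : ℕ) = m - 1) :
    Ideal.Quotient.mk (lsIdeal m) (xMon I ^ 2) = 0 := by
  rw [xMon_sq, map_prod]
  exact Finset.prod_eq_zero (Finset.mem_univ r) (mk_relB _ h)

lemma mk_sq_update {k : ℕ} (I : Fin k → Fin m) (p q : Fin k) (hpq : p ≠ q) (c : Fin m)
    (hb : ((I q : Fin m) : ℕ) = ((I p : Fin m) : ℕ) + 1) (hc : (c : ℕ) = ((I q : Fin m) : ℕ) + 1) :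
    Ideal.Quotient.mk (lsIdeal m) (xMon (Function.update I q c) ^ 2)
      = Ideal.Quotient.mk (lsIdeal m) (xMon I ^ 2) := by
  have hpq' : p ∈ Finset.univ.erase q := Finset.mem_erase.mpr ⟨hpq, Finset.mem_univ p⟩
  set P : MvPolynomial (Fin m) (ZMod 2) := ∏ s ∈ (Finset.univ.erase q).erase p, X (I s) ^ 2 with hP
  have hIdecomp : xMon I ^ 2 = X (I q) ^ 2 * (X (I p) ^ 2 * P) := by
    rw [xMon_sq, ← Finset.mul_prod_erase Finset.univ _ (Finset.mem_univ q),
      ← Finset.mul_prod_erase _ _ hpq']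
  have hJdecomp : xMon (Function.update I q c) ^ 2 = X c ^ 2 * (X (I p) ^ 2 * P) := by
    rw [xMon_sq, ← Finset.mul_prod_erase Finset.univ _ (Finset.mem_univ q),
      Function.update_self]
    congr 1
    rw [← Finset.mul_prod_erase _ _ hpq', Function.update_of_ne hpq]
    congr 1
    apply Finset.prod_congr rfl
    intro s hs
    rw [Function.update_of_ne (Finset.mem_erase.mp (Finset.mem_erase.mp hs).2).1]
  rw [hIdecomp, hJdecomp]
  have h1 : (X c ^ 2 * (X (I p) ^ 2 * P) : MvPolynomial (Fin m) (ZMod 2))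
      = (X (I p) ^ 2 * X c ^ 2) * P := by ring
  have h2 : (X (I q) ^ 2 * (X (I p) ^ 2 * P) : MvPolynomial (Fin m) (ZMod 2))
      = (X (I p) ^ 2 * X (I q) ^ 2) * P := by ring
  rw [h1, h2]
  calc Ideal.Quotient.mk (lsIdeal m) ((X (I p) ^ 2 * X c ^ 2) * P)
      = Ideal.Quotient.mk (lsIdeal m) (X (I p) ^ 2 * X c ^ 2)
        * Ideal.Quotient.mk (lsIdeal m) P := map_mul _ _ _
    _ = Ideal.Quotient.mk (lsIdeal m) (X (I p) ^ 2 * X (I q) ^ 2)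
        * Ideal.Quotient.mk (lsIdeal m) P := by rw [mk_relC (I p) (I q) c hb hc]
    _ = Ideal.Quotient.mk (lsIdeal m) ((X (I p) ^ 2 * X (I q) ^ 2) * P) := (map_mul _ _ _).symm


end LS

/-- For `n ≥ 2`, `1 ≤ k ≤ n−1` and a strictly increasing `k`-tuple
`I = (i₁ < ⋯ < i_k)` with entries in `{1,…,n−1}` (encoded 0-based as a strictly monotone
`I : Fin k → Fin (n-1)`, so the 1-based entry is `(I j : ℕ) + 1`): `I ∈ 𝓘_k^max(n−1)` iff
`i_k ≤ n−2` and `i_{r+1} − i_r ≥ 2` for all `1 ≤ r ≤ k−1`. -/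
theorem stmt13 (n k : ℕ) (hn : 2 ≤ n) (hk1 : 1 ≤ k) (hk2 : k ≤ n - 1)
    (I : Fin k → Fin (n - 1)) (hI : StrictMono I) :
    I ∈ Imax (n - 1) k ↔
      ((I ⟨k - 1, by omega⟩ : ℕ) + 1 ≤ n - 2 ∧
        ∀ r : ℕ, (hr : r + 1 < k) → (I ⟨r, by omega⟩ : ℕ) + 2 ≤ (I ⟨r + 1, hr⟩ : ℕ)) := by
  have hm1 : 1 ≤ n - 1 := by omega
  constructor
  · rintro ⟨hmono, hne, hmax⟩
    have hlast : ((I ⟨k - 1, by omega⟩ : Fin (n-1)) : ℕ) + 1 ≤ n - 2 := by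
      by_contra hcon
      push_neg at hcon
      have hisLt := (I ⟨k - 1, by omega⟩).isLt
      have hval : ((I ⟨k - 1, by omega⟩ : Fin (n-1)) : ℕ) = (n - 1) - 1 := by omega
      exact hne (mk_sq_zero_top I _ hval)
    refine ⟨hlast, ?_⟩
    intro r hr
    by_contra hcon
    push_neg at hcon
    -- the set of "violating" positions
    set Vs : Finset (Fin k) := Finset.univ.filter (fun q : Fin k =>
      1 ≤ (q : ℕ) ∧ ((I q : Fin (n-1)) : ℕ)
        = ((I ⟨(q:ℕ) - 1, lt_of_le_of_lt (Nat.sub_le _ _) q.isLt⟩ : Fin (n-1)) : ℕ) + 1) with hVs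
    have hmem0 : (⟨r + 1, hr⟩ : Fin k) ∈ Vs := by
      rw [hVs, Finset.mem_filter]
      refine ⟨Finset.mem_univ _, by simp, ?_⟩
      have hlt : (⟨r, by omega⟩ : Fin k) < ⟨r + 1, hr⟩ := by rw [Fin.lt_def]; simp
      have := Fin.lt_def.mp (hmono hlt)
      simp only
      have hre : (⟨r + 1 - 1, lt_of_le_of_lt (Nat.sub_le _ _) (⟨r+1,hr⟩ : Fin k).isLt⟩ : Fin k)
          = ⟨r, by omega⟩ := Fin.ext (by simp)
      rw [hre]
      omega
    have hVne : Vs.Nonempty := ⟨_, hmem0⟩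
    set q : Fin k := Vs.max' hVne with hq
    have hqmem := Finset.max'_mem Vs hVne
    have hqprop := (Finset.mem_filter.mp hqmem).2
    obtain ⟨hq1, hqviol⟩ := hqprop
    set p : Fin k := ⟨(q:ℕ) - 1, lt_of_le_of_lt (Nat.sub_le _ _) q.isLt⟩ with hp
    have hpq : p ≠ q := by
      intro h
      have := congrArg Fin.val h
      simp only [hp] at this
      omega
    -- room above I q
    have hcroom : ((I q : Fin (n-1)) : ℕ) + 1 < n - 1 := by
      rcases Nat.lt_or_ge ((q:ℕ) + 1) k with hk' | hk'
      · have hlt : q < (⟨(q:ℕ) + 1, hk'⟩ : Fin k) := by rw [Fin.lt_def]; simp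
        have := Fin.lt_def.mp (hmono hlt)
        have := (I (⟨(q:ℕ) + 1, hk'⟩ : Fin k)).isLt
        omega
      · have hqk : (q:ℕ) = k - 1 := by have := q.isLt; omega
        have hre : q = ⟨k - 1, by omega⟩ := Fin.ext hqk
        rw [hre]
        omega
    set c : Fin (n-1) := ⟨((I q : Fin (n-1)) : ℕ) + 1, hcroom⟩ with hc
    -- if there is a position after q, the gap there is ≥ 2
    have hafter : ∀ hk' : (q:ℕ) + 1 < k,
        ((I q : Fin (n-1)) : ℕ) + 2 ≤ ((I ⟨(q:ℕ) + 1, hk'⟩ : Fin (n-1)) : ℕ) := by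
      intro hk'
      have hnotmem : (⟨(q:ℕ) + 1, hk'⟩ : Fin k) ∉ Vs := by
        intro hmem
        have := Finset.le_max' Vs _ hmem
        rw [← hq] at this
        have := Fin.le_def.mp this
        simp at this
      have hgt : ((I q : Fin (n-1)) : ℕ) < ((I ⟨(q:ℕ) + 1, hk'⟩ : Fin (n-1)) : ℕ) := by
        have hlt : q < (⟨(q:ℕ) + 1, hk'⟩ : Fin k) := by rw [Fin.lt_def]; simp
        exact Fin.lt_def.mp (hmono hlt)
      by_contra hcon2
      push_neg at hcon2
      apply hnotmem
      rw [hVs, Finset.mem_filter]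
      refine ⟨Finset.mem_univ _, by simp, ?_⟩
      have hre : (⟨(q:ℕ) + 1 - 1,
          lt_of_le_of_lt (Nat.sub_le _ _) (⟨(q:ℕ)+1,hk'⟩ : Fin k).isLt⟩ : Fin k) = q :=
        Fin.ext (by simp)
      rw [hre]
      omega
    set J : Fin k → Fin (n-1) := Function.update I q c with hJ
    have hJmk : Ideal.Quotient.mk (lsIdeal (n-1)) (xMon J ^ 2)
        = Ideal.Quotient.mk (lsIdeal (n-1)) (xMon I ^ 2) := by
      apply mk_sq_update I p q hpq c
      · rw [← hqviol]
      · rfl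
    have hJmono : StrictMono J := by
      intro a b hab
      rw [Fin.lt_def]
      by_cases ha : a = q <;> by_cases hb : b = q
      · exfalso; rw [ha, hb] at hab; exact lt_irrefl _ hab
      · subst ha
        rw [hJ, Function.update_self, Function.update_of_ne hb]
        have hbk : (q:ℕ) + 1 ≤ (b:ℕ) := Fin.lt_def.mp hab
        have hbk' : (q:ℕ) + 1 < k := lt_of_le_of_lt hbk b.isLt
        have h1 := hafter hbk'
        have h2 : ((I ⟨(q:ℕ)+1, hbk'⟩ : Fin (n-1)) : ℕ) ≤ ((I b : Fin (n-1)) : ℕ) := by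
          have : (⟨(q:ℕ)+1, hbk'⟩ : Fin k) ≤ b := Fin.le_def.mpr hbk
          exact Fin.le_def.mp (hmono.monotone this)
        simp only [hc]
        omega
      · subst hb
        rw [hJ, Function.update_self, Function.update_of_ne ha]
        have := Fin.lt_def.mp (hmono hab)
        simp only [hc]
        omega
      · rw [hJ, Function.update_of_ne ha, Function.update_of_ne hb]
        exact Fin.lt_def.mp (hmono hab)
    have hJne : J ≠ I := by
      intro h
      have := congrArg (fun f => ((f q : Fin (n-1)) : ℕ)) h
      simp only [hJ, Function.update_self, hc] at this
      omega
    have hJge : ∀ s, ((I s : Fin (n-1)) : ℕ) ≤ ((J s : Fin (n-1)) : ℕ) := by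
      intro s
      by_cases hs : s = q
      · subst hs; rw [hJ, Function.update_self]; simp only [hc]; omega
      · rw [hJ, Function.update_of_ne hs]
    exact not_lexLe J I hJge hJne (hmax J hJmono hJmk)
  · rintro ⟨hlast, hgap⟩
    have hfit : ∀ r : Fin k, ((I r : Fin (n-1)) : ℕ) + 1 < n - 1 := by
      intro r
      have hrle : r ≤ (⟨k - 1, by omega⟩ : Fin k) := by
        rw [Fin.le_def]
        have := r.isLt
        simp only
        omega
      have := Fin.le_def.mp (hI.monotone hrle)
      omega
    have hgap2 : ∀ (r s : Fin k), r < s →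
        ((I r : Fin (n-1)) : ℕ) + 2 ≤ ((I s : Fin (n-1)) : ℕ) :=
      gap_chain I (fun r hr => hgap r hr)
    have hmkS := mk_xMon_sq I hfit
    have hNS := Nmap_xMon_sq I hfit hgap2
    refine ⟨hI, ?_, ?_⟩
    · intro h0
      rw [hmkS, Ideal.Quotient.eq_zero_iff_mem] at h0
      have := Nmap_zero_of_mem _ h0
      rw [hNS] at this
      exact one_ne_zero (Finsupp.single_eq_zero.mp this)
    · intro J hJ hmkeq
      have h1 : Nmap (n-1) (xMon J ^ 2)
          = Finsupp.single (Finset.image (iota (n-1) k I hfit) Finset.univ) 1 := by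
        rw [Nmap_congr hmkeq, Nmap_congr hmkS, hNS]
      have h3 := Sfin_eq_of_Nmap J _ h1
      exact lexLe_of_pointwise J I (pointwise_le I J hfit hgap2 hJ h3)
end

section
/- Let m ≥ 1 and n ≥ 2m+1. A strictly increasing m-tuple J = (a₁ < ⋯ < a_m) with entries in {1,…,n−1} satisfies x_J² = (x₁x₃x₅⋯x_{2m−1})² in the quotient ring F₂[x₁,…,x_{n−1}]/I(n) if and only if j ≤ a_j ≤ 2j − 1 for every 1 ≤ j ≤ m. -/
open MvPolynomial

/-- insert with push-up -/
def ins (a : ℕ) : List ℕ → List ℕ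
  | [] => [a]
  | b :: l => if a < b then a :: b :: l
      else if a = b then b :: ins (a+1) l
      else b :: ins a l

lemma ins_nil (a : ℕ) : ins a [] = [a] := rfl

lemma ins_cons_lt {a b : ℕ} (l : List ℕ) (h : a < b) : ins a (b :: l) = a :: b :: l := by
  simp [ins, h]

lemma ins_cons_eq {a b : ℕ} (l : List ℕ) (h : a = b) : ins a (b :: l) = b :: ins (a+1) l := by
  simp [ins, h]

lemma ins_cons_gt {a b : ℕ} (l : List ℕ) (h : b < a) : ins a (b :: l) = b :: ins a l := by
  have h1 : ¬ a < b := by omega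
  have h2 : ¬ a = b := by omega
  simp [ins, h1, h2]

lemma ins_ins_lt : ∀ (l : List ℕ) (a b : ℕ), a < b → ins a (ins b l) = ins b (ins a l) := by
  intro l
  induction l with
  | nil =>
    intro a b hab
    rw [ins_nil, ins_nil, ins_cons_lt _ hab, ins_cons_gt _ hab, ins_nil]
  | cons c t ih =>
    intro a b hab
    rcases lt_trichotomy b c with hbc | hbc | hbc
    · have hac : a < c := lt_trans hab hbc
      rw [ins_cons_lt _ hbc, ins_cons_lt _ hab, ins_cons_lt _ hac, ins_cons_gt _ hab,
        ins_cons_lt _ hbc]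
    · subst hbc
      rw [ins_cons_eq _ rfl, ins_cons_lt _ hab, ins_cons_lt _ hab, ins_cons_gt _ hab,
        ins_cons_eq _ rfl]
    · -- c < b
      rw [ins_cons_gt _ hbc]
      rcases lt_trichotomy a c with hac | hac | hac
      · rw [ins_cons_lt _ hac, ins_cons_lt _ hac, ins_cons_gt _ hab, ins_cons_gt _ hbc]
      · subst hac
        rw [ins_cons_eq _ rfl, ins_cons_eq _ rfl, ins_cons_gt _ hbc]
        rcases eq_or_lt_of_le (Nat.succ_le_of_lt hab) with h | h
        · subst h; rfl
        · rw [ih _ _ h]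
      · rw [ins_cons_gt _ hac, ins_cons_gt _ hac, ins_cons_gt _ hbc, ih _ _ hab]

lemma ins_ins (a b : ℕ) (l : List ℕ) : ins a (ins b l) = ins b (ins a l) := by
  rcases lt_trichotomy a b with h | h | h
  · exact ins_ins_lt l a b h
  · subst h; rfl
  · exact (ins_ins_lt l b a h).symm

instance : LeftCommutative ins := ⟨fun a b l => ins_ins a b l⟩

lemma ins_double (a : ℕ) (l : List ℕ) : ins a (ins a l) = ins a (ins (a+1) l) := by
  rw [ins_ins a (a+1) l]
  induction l with
  | nil =>
    rw [ins_nil, ins_cons_eq _ rfl, ins_nil, ins_cons_gt _ (by omega : a < a+1), ins_nil]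
  | cons c t ih =>
    rcases lt_trichotomy a c with hac | hac | hac
    · rw [ins_cons_lt _ hac, ins_cons_eq _ rfl, ins_cons_gt _ (by omega : a < a+1)]
    · subst hac
      rw [ins_cons_eq _ rfl, ins_cons_eq _ rfl, ins_cons_gt _ (by omega : a < a+1)]
    · rw [ins_cons_gt _ hac, ins_cons_gt _ hac, ins_cons_gt _ (by omega : c < a+1), ih]

lemma ins_exists_ge (a : ℕ) (l : List ℕ) : ∃ x ∈ ins a l, a ≤ x := by
  induction l generalizing a with
  | nil => exact ⟨a, by simp [ins_nil], le_refl a⟩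
  | cons b t ih =>
    rcases lt_trichotomy a b with h | h | h
    · exact ⟨a, by simp [ins_cons_lt _ h], le_refl a⟩
    · subst h
      obtain ⟨x, hx, hax⟩ := ih (a+1)
      exact ⟨x, by simp [ins_cons_eq _ rfl, hx], by omega⟩
    · obtain ⟨x, hx, hax⟩ := ih a
      exact ⟨x, by simp [ins_cons_gt _ h, hx], hax⟩

lemma ins_exists_gt (a : ℕ) (l : List ℕ) (h : ∃ x ∈ l, a ≤ x) :
    ∃ y ∈ ins a l, a + 1 ≤ y := by
  induction l generalizing a with
  | nil => simp at h
  | cons b t ih =>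
    obtain ⟨x, hx, hax⟩ := h
    rcases lt_trichotomy a b with h' | h' | h'
    · refine ⟨b, by simp [ins_cons_lt _ h'], by omega⟩
    · subst h'
      obtain ⟨y, hy, hay⟩ := ins_exists_ge (a+1) t
      exact ⟨y, by simp [ins_cons_eq _ rfl, hy], hay⟩
    · rcases List.mem_cons.mp hx with rfl | hxt
      · omega
      · obtain ⟨y, hy, hay⟩ := ih a ⟨x, hxt, hax⟩
        exact ⟨y, by simp [ins_cons_gt _ h', hy], hay⟩

/-- ins into a list is, as a multiset, adding one element `≥ a`. -/
lemma ins_coe (a : ℕ) (l : List ℕ) :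
    ∃ a', a ≤ a' ∧ (↑(ins a l) : Multiset ℕ) = a' ::ₘ (↑l : Multiset ℕ) := by
  induction l generalizing a with
  | nil => exact ⟨a, le_refl a, rfl⟩
  | cons b t ih =>
    rcases lt_trichotomy a b with h | h | h
    · exact ⟨a, le_refl a, by rw [ins_cons_lt _ h]; rfl⟩
    · subst h
      obtain ⟨a', ha', he⟩ := ih (a+1)
      refine ⟨a', by omega, ?_⟩
      rw [ins_cons_eq _ rfl, ← Multiset.cons_coe, ← Multiset.cons_coe, he,
        Multiset.cons_swap]
    · obtain ⟨a', ha', he⟩ := ih a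
      refine ⟨a', ha', ?_⟩
      rw [ins_cons_gt _ h, ← Multiset.cons_coe, ← Multiset.cons_coe, he,
        Multiset.cons_swap]

lemma ins_range' : ∀ (j s a : ℕ), s ≤ a → a ≤ s + j →
    ins a (List.range' s j) = List.range' s (j+1) := by
  intro j
  induction j with
  | zero =>
    intro s a h1 h2
    have : a = s := by omega
    subst this
    simp [List.range'_succ, ins_nil]
  | succ j ih =>
    intro s a h1 h2
    rw [List.range'_succ, List.range'_succ]
    rcases eq_or_lt_of_le h1 with rfl | h
    · rw [ins_cons_eq _ rfl, ih (s+1) (s+1) (le_refl _) (by omega)]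
    · rw [ins_cons_gt _ h, ih (s+1) a (by omega) (by omega)]

lemma ins_range (a k : ℕ) (h : a ≤ k) : ins a (List.range k) = List.range (k+1) := by
  rw [List.range_eq_range', List.range_eq_range', ins_range' k 0 a (by omega) (by omega)]

def nfM (s : Multiset ℕ) : List ℕ := Multiset.foldr ins [] s

lemma nfM_zero : nfM 0 = [] := rfl

lemma nfM_cons (a : ℕ) (s : Multiset ℕ) : nfM (a ::ₘ s) = ins a (nfM s) :=
  Multiset.foldr_cons _ _ _ _

lemma nfM_countP (t : ℕ) (s : Multiset ℕ) :
    (↑(nfM s) : Multiset ℕ).countP (· < t) ≤ s.countP (· < t) := by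
  induction s using Multiset.induction with
  | empty => simp [nfM_zero]
  | cons a s ih =>
    obtain ⟨a', ha', he⟩ := ins_coe a (nfM s)
    rw [nfM_cons, he, Multiset.countP_cons, Multiset.countP_cons]
    have : (if a' < t then 1 else 0) ≤ (if a < t then 1 else 0) := by
      split_ifs <;> omega
    omega

lemma countP_range (c k : ℕ) : (Multiset.range k).countP (· < c) = min c k := by
  induction k with
  | zero => simp
  | succ k ih =>
    rw [Multiset.range_succ, Multiset.countP_cons, ih]
    split_ifs <;> omega

/-- the multiset `{a 0, a 0, a 1, a 1, …, a (m-1), a (m-1)}` -/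
def Dm (a : ℕ → ℕ) : ℕ → Multiset ℕ
  | 0 => 0
  | m + 1 => a m ::ₘ a m ::ₘ Dm a m

lemma nfM_Dm (a : ℕ → ℕ) (m : ℕ) (hb : ∀ j, j < m → a j ≤ 2 * j) :
    nfM (Dm a m) = List.range (2 * m) := by
  induction m with
  | zero => rfl
  | succ m ih =>
    have h1 : a m ≤ 2 * m := hb m (by omega)
    rw [show 2 * (m + 1) = 2 * m + 1 + 1 by omega, Dm, nfM_cons, nfM_cons,
      ih (fun j hj => hb j (by omega)), ins_range _ _ h1, ins_range _ _ (by omega)]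

lemma Dm_countP_le (a : ℕ → ℕ) (t j₀ : ℕ) :
    ∀ m, (∀ j, j₀ ≤ j → j < m → ¬ (a j < t)) →
      (Dm a m).countP (· < t) ≤ 2 * min m j₀ := by
  intro m
  induction m with
  | zero => simp [Dm]
  | succ m ih =>
    intro h
    have hm := ih (fun j h1 h2 => h j h1 (by omega))
    rw [Dm, Multiset.countP_cons, Multiset.countP_cons]
    rcases le_or_gt j₀ m with hj | hj
    · have : ¬ (a m < t) := h m hj (by omega)
      simp only [this, if_false]
      omega
    · have : min m j₀ = m := by omega
      have : min (m+1) j₀ = m + 1 := by omega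
      split_ifs <;> omega

lemma nfM_Dm_ne (a : ℕ → ℕ) (m j₀ : ℕ) (hj₀ : j₀ < m)
    (hmono : ∀ i j, i < j → j < m → a i < a j) (hbig : 2 * j₀ + 1 ≤ a j₀) :
    nfM (Dm a m) ≠ List.range (2 * m) := by
  intro hEq
  set t := 2 * j₀ + 1 with ht
  have h1 : (Dm a m).countP (· < t) ≤ 2 * min m j₀ :=
    Dm_countP_le a t j₀ m (by
      intro j hji hjm
      have : a j₀ ≤ a j := by
        rcases eq_or_lt_of_le hji with rfl | h
        · exact le_refl _
        · exact le_of_lt (hmono j₀ j h hjm)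
      omega)
  have h2 := nfM_countP t (Dm a m)
  rw [hEq] at h2
  have h3 : (↑(List.range (2*m)) : Multiset ℕ) = Multiset.range (2*m) := rfl
  rw [h3, countP_range] at h2
  have : min t (2*m) = t := by omega
  omega


noncomputable def yv (N : ℕ) (i : ℕ) :
    MvPolynomial (Fin N) (ZMod 2) ⧸ lsIdeal N :=
  if h : i < N then Ideal.Quotient.mk (lsIdeal N) (X ⟨i, h⟩) else 0

lemma yv_rel (N i : ℕ) : yv N i * yv N i = yv N i * yv N (i + 1) := by
  by_cases hi : i < N
  · by_cases hj : i + 1 < N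
    · -- generator of the first kind
      have hgen : ((X ⟨i, hi⟩ : MvPolynomial (Fin N) (ZMod 2)) ^ 2 + X ⟨i, hi⟩ * X ⟨i+1, hj⟩) ∈ lsIdeal N := by
        apply Ideal.subset_span
        exact Set.mem_union_left _ ⟨⟨i, hi⟩, ⟨i+1, hj⟩, rfl, rfl⟩
      rw [yv, yv, dif_pos hi, dif_pos hj]
      rw [← map_mul, ← map_mul]
      apply Ideal.Quotient.eq.mpr
      have : (X ⟨i, hi⟩ : MvPolynomial (Fin N) (ZMod 2)) * X ⟨i, hi⟩ - X ⟨i, hi⟩ * X ⟨i+1, hj⟩ =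
          (X ⟨i, hi⟩ : MvPolynomial (Fin N) (ZMod 2)) ^ 2 + X ⟨i, hi⟩ * X ⟨i+1, hj⟩ := by
        rw [CharTwo.sub_eq_add, sq]
      rw [this]
      exact hgen
    · -- i = N - 1
      have hiN : i = N - 1 := by omega
      have hgen : ((X ⟨i, hi⟩ : MvPolynomial (Fin N) (ZMod 2)) ^ 2) ∈ lsIdeal N := by
        apply Ideal.subset_span
        exact Set.mem_union_right _ ⟨⟨i, hi⟩, hiN, rfl⟩
      rw [yv, yv, dif_pos hi, dif_neg hj, mul_zero, ← map_mul, ← sq]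
      exact Ideal.Quotient.eq_zero_iff_mem.mpr hgen
  · rw [yv, dif_neg hi, zero_mul, zero_mul]

noncomputable def phi (N : ℕ) (s : Multiset ℕ) :
    MvPolynomial (Fin N) (ZMod 2) ⧸ lsIdeal N :=
  (s.map (yv N)).prod

lemma phi_zero (N : ℕ) : phi N 0 = 1 := rfl

lemma phi_cons (N a : ℕ) (s : Multiset ℕ) : phi N (a ::ₘ s) = yv N a * phi N s := by
  rw [phi, Multiset.map_cons, Multiset.prod_cons]; rfl

lemma phi_coe_cons (N a : ℕ) (l : List ℕ) :
    phi N ↑(a :: l) = yv N a * phi N ↑l := by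
  rw [← Multiset.cons_coe, phi_cons]

lemma phi_ins (N : ℕ) (l : List ℕ) (a : ℕ) :
    phi N ↑(ins a l) = yv N a * phi N ↑l := by
  induction l generalizing a with
  | nil => rw [ins_nil, phi_coe_cons]
  | cons b t ih =>
    rcases lt_trichotomy a b with h | h | h
    · rw [ins_cons_lt _ h, phi_coe_cons]
    · subst h
      rw [ins_cons_eq _ rfl, phi_coe_cons, ih, phi_coe_cons, ← mul_assoc,
        ← yv_rel, mul_assoc]
    · rw [ins_cons_gt _ h, phi_coe_cons, ih, phi_coe_cons, ← mul_assoc,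
        mul_comm (yv N b) (yv N a), mul_assoc]

lemma phi_nfM (N : ℕ) (s : Multiset ℕ) : phi N s = phi N ↑(nfM s) := by
  induction s using Multiset.induction with
  | empty => rw [nfM_zero, phi_zero]; rfl
  | cons a s ih => rw [phi_cons, nfM_cons, phi_ins, ih]

lemma phi_Dm (N : ℕ) (a : ℕ → ℕ) (m : ℕ) :
    phi N (Dm a m) = ∏ j : Fin m, (yv N (a (j : ℕ)))^2 := by
  induction m with
  | zero => simp [Dm, phi_zero]
  | succ m ih =>
    rw [Dm, phi_cons, phi_cons, ih, Fin.prod_univ_castSucc]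
    simp only [Fin.coe_castSucc, Fin.val_last]
    ring

/-! ### The separating linear functional -/

noncomputable def gmap (N : ℕ) (μ : Fin N →₀ ℕ) : List ℕ :=
  nfM ((Finsupp.toMultiset μ).map Fin.val)

noncomputable def lamHom (N : ℕ) :
    MvPolynomial (Fin N) (ZMod 2) →+ (List ℕ →₀ ZMod 2) :=
  (Finsupp.mapDomain.addMonoidHom (gmap N)).comp
    (AddMonoidAlgebra.coeffAddEquiv (R := ZMod 2) (M := Fin N →₀ ℕ)).toAddMonoidHom

lemma lam_monomial (N : ℕ) (μ : Fin N →₀ ℕ) (c : ZMod 2) :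
    lamHom N (monomial μ c) = Finsupp.single (gmap N μ) c := by
  rw [← single_eq_monomial]
  exact Finsupp.mapDomain_single (f := gmap N) (a := μ) (b := c)

lemma cons_two_eq (s : Multiset ℕ) (x y : ℕ) : s + ({x} + {y}) = x ::ₘ y ::ₘ s := by
  rw [Multiset.singleton_add, add_comm, Multiset.cons_add, Multiset.singleton_add]

lemma gmap_add_sq (N : ℕ) (μ : Fin N →₀ ℕ) (i : Fin N) :
    gmap N (μ + Finsupp.single i 2) = ins i.val (ins i.val (gmap N μ)) := by
  rw [gmap, map_add, Finsupp.toMultiset_single, Multiset.map_add, two_nsmul,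
    Multiset.map_add, Multiset.map_singleton, cons_two_eq, nfM_cons, nfM_cons]
  rfl

lemma gmap_add_two (N : ℕ) (μ : Fin N →₀ ℕ) (i j : Fin N) :
    gmap N (μ + (Finsupp.single i 1 + Finsupp.single j 1)) =
      ins i.val (ins j.val (gmap N μ)) := by
  rw [gmap, map_add, map_add, Finsupp.toMultiset_single, Finsupp.toMultiset_single,
    one_nsmul, one_nsmul, Multiset.map_add, Multiset.map_add, Multiset.map_singleton,
    Multiset.map_singleton, cons_two_eq, nfM_cons, nfM_cons]
  rfl

lemma X_as_monomial {N : ℕ} (i : Fin N) :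
    (X i : MvPolynomial (Fin N) (ZMod 2)) = monomial (Finsupp.single i 1) 1 := rfl

lemma lam_vanish (N : ℕ) (L : List ℕ) (hL : ∀ x ∈ L, x < N) :
    ∀ p ∈ lsIdeal N, lamHom N p L = 0 := by
  have H : ∀ p ∈ lsIdeal N, ∀ h : MvPolynomial (Fin N) (ZMod 2),
      lamHom N (h * p) L = 0 := by
    intro p hp
    induction hp using Submodule.span_induction with
    | mem q hq =>
      intro h
      induction h using MvPolynomial.induction_on' with
      | add p1 p2 ih1 ih2 => rw [add_mul, map_add, Finsupp.add_apply, ih1, ih2, add_zero]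
      | monomial μ c =>
        rcases hq with ⟨i, j, hij, rfl⟩ | ⟨i, hiN, rfl⟩
        · -- x_i^2 + x_i x_{i+1}
          have e1 : (monomial μ c : MvPolynomial (Fin N) (ZMod 2)) * (X i ^ 2) =
              monomial (μ + Finsupp.single i 2) c := by
            rw [X_pow_eq_monomial, monomial_mul, mul_one]
          have e2 : (monomial μ c : MvPolynomial (Fin N) (ZMod 2)) * (X i * X j) =
              monomial (μ + (Finsupp.single i 1 + Finsupp.single j 1)) c := by
            rw [X_as_monomial, X_as_monomial, monomial_mul, one_mul, monomial_mul, mul_one]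
          rw [mul_add, e1, e2, map_add, Finsupp.add_apply, lam_monomial, lam_monomial,
            gmap_add_sq, gmap_add_two, hij, ins_double, Finsupp.single_apply]
          split_ifs with h
          · exact CharTwo.add_self_eq_zero c
          · exact add_zero 0
        · -- x_{N-1}^2
          have e1 : (monomial μ c : MvPolynomial (Fin N) (ZMod 2)) * (X i ^ 2) =
              monomial (μ + Finsupp.single i 2) c := by
            rw [X_pow_eq_monomial, monomial_mul, mul_one]
          rw [e1, lam_monomial, Finsupp.single_apply]
          have hne : gmap N (μ + Finsupp.single i 2) ≠ L := by
            intro hEq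
            obtain ⟨x, hx, hax⟩ := ins_exists_ge i.val (gmap N μ)
            obtain ⟨y, hy, hay⟩ :=
              ins_exists_gt i.val (ins i.val (gmap N μ)) ⟨x, hx, hax⟩
            rw [gmap_add_sq] at hEq
            rw [hEq] at hy
            have := hL y hy
            have := i.isLt
            omega
          rw [if_neg hne]
    | zero => intro h; rw [mul_zero, map_zero]; rfl
    | add x y hx hy ihx ihy =>
      intro h
      rw [mul_add, map_add, Finsupp.add_apply, ihx h, ihy h, add_zero]
    | smul r x hx ihx =>
      intro h
      rw [smul_eq_mul, ← mul_assoc]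
      exact ihx (h * r)
  intro p hp
  have := H p hp 1
  rwa [one_mul] at this

/-! ### monomial form of products of squares of variables -/

lemma monomial_prod (N : ℕ) {α : Type*} (s : Finset α) (f : α → (Fin N →₀ ℕ)) :
    (∏ j ∈ s, (monomial (f j) 1 : MvPolynomial (Fin N) (ZMod 2))) =
      monomial (∑ j ∈ s, f j) 1 := by
  classical
  induction s using Finset.induction_on with
  | empty => simp
  | insert _ _ hnot ih =>
    rw [Finset.prod_insert hnot, Finset.sum_insert hnot, ih, monomial_mul, mul_one]

lemma prod_X_sq (N m : ℕ) (F : Fin m → Fin N) :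
    ((∏ j : Fin m, X (F j) : MvPolynomial (Fin N) (ZMod 2)))^2 =
      monomial (∑ j : Fin m, Finsupp.single (F j) 2) 1 := by
  rw [← Finset.prod_pow]
  have : ∀ j : Fin m, (X (F j) : MvPolynomial (Fin N) (ZMod 2))^2 =
      monomial (Finsupp.single (F j) 2) 1 := fun j => X_pow_eq_monomial
  rw [Finset.prod_congr rfl (fun j _ => this j), monomial_prod]

lemma key_multiset (N m : ℕ) (F : Fin m → Fin N) (a : ℕ → ℕ)
    (ha : ∀ j : Fin m, a (j : ℕ) = (F j : ℕ)) :
    (Finsupp.toMultiset (∑ j : Fin m, Finsupp.single (F j) 2)).map Fin.val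
      = Dm a m := by
  induction m with
  | zero => simp [Dm]
  | succ m ih =>
    rw [Fin.sum_univ_castSucc, map_add, Multiset.map_add,
      ih (fun j => F j.castSucc) (fun j => ha j.castSucc),
      Finsupp.toMultiset_single, two_nsmul, Multiset.map_add, Multiset.map_singleton,
      cons_two_eq, Dm]
    have : a m = (F (Fin.last m) : ℕ) := ha (Fin.last m)
    rw [this]

lemma mk_sq (N m : ℕ) (F : Fin m → Fin N) (a : ℕ → ℕ)
    (ha : ∀ j : Fin m, a (j : ℕ) = (F j : ℕ)) :
    Ideal.Quotient.mk (lsIdeal N) ((∏ j : Fin m, X (F j))^2) = phi N (Dm a m) := by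
  rw [phi_Dm, map_pow, map_prod, ← Finset.prod_pow]
  apply Finset.prod_congr rfl
  intro j _
  rw [ha j, yv, dif_pos (F j).isLt]

/-- Let `m ≥ 1` and `n ≥ 2m+1`.  A strictly increasing `m`-tuple
`J = (a₁ < ⋯ < a_m)` with entries in `{1,…,n−1}` (encoded 0-based as a strictly monotone
`J : Fin m → Fin (n-1)`, the 1-based `j`-th entry being `(J ⟨j-1⟩ : ℕ) + 1`) satisfies
`x_J² = (x₁x₃⋯x_{2m−1})²` in `F₂[x₁,…,x_{n−1}]/I(n)` if and only if `j ≤ a_j ≤ 2j−1`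
for all `1 ≤ j ≤ m`. -/
theorem stmt16 (m n : ℕ) (hm : 1 ≤ m) (hn : 2 * m + 1 ≤ n)
    (J : Fin m → Fin (n - 1)) (hJ : StrictMono J) :
    Ideal.Quotient.mk (lsIdeal (n - 1)) ((∏ j : Fin m, X (J j)) ^ 2) =
      Ideal.Quotient.mk (lsIdeal (n - 1))
        ((∏ j : Fin m, X (⟨2 * (j : ℕ), by have := j.isLt; omega⟩ : Fin (n - 1))) ^ 2) ↔
      ∀ j : Fin m, (j : ℕ) ≤ (J j : ℕ) ∧ (J j : ℕ) ≤ 2 * (j : ℕ) := by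
  have hNm : 2 * m ≤ n - 1 := by omega
  set a : ℕ → ℕ := fun k => if h : k < m then ((J ⟨k, h⟩ : ℕ)) else 0 with haDef
  have ha : ∀ j : Fin m, a (j : ℕ) = (J j : ℕ) := by
    intro j
    simp only [haDef]
    rw [dif_pos j.isLt]
  have hmono : ∀ i k, i < k → k < m → a i < a k := by
    intro i k hik hkm
    have h := hJ (show (⟨i, by omega⟩ : Fin m) < ⟨k, hkm⟩ from Fin.mk_lt_mk.mpr hik)
    simp only [haDef]
    rw [dif_pos (show i < m by omega), dif_pos hkm]
    exact Fin.lt_def.mp h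
  have hlow : ∀ k (hk : k < m), k ≤ (J ⟨k, hk⟩ : ℕ) := by
    intro k
    induction k with
    | zero => intro hk; exact Nat.zero_le _
    | succ k ih =>
      intro hk
      have h1 : J ⟨k, by omega⟩ < J ⟨k + 1, hk⟩ := hJ (Fin.mk_lt_mk.mpr (by omega))
      have h1' := Fin.lt_def.mp h1
      have h2 := ih (by omega)
      omega
  constructor
  · -- forward
    intro hEq
    have hsub := Ideal.Quotient.eq.mp hEq
    have hL : ∀ x ∈ List.range (2 * m), x < n - 1 := by
      intro x hx; rw [List.mem_range] at hx; omega
    have h0 := lam_vanish (n - 1) (List.range (2 * m)) hL _ hsub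
    rw [map_sub, Finsupp.sub_apply, sub_eq_zero] at h0
    rw [prod_X_sq, prod_X_sq, lam_monomial, lam_monomial, Finsupp.single_apply,
      Finsupp.single_apply] at h0
    have hq : gmap (n - 1) (∑ j : Fin m, Finsupp.single
        ((⟨2 * (j : ℕ), by have := j.isLt; omega⟩ : Fin (n - 1))) 2) = List.range (2 * m) := by
      rw [gmap, key_multiset (n - 1) m _ (fun k => 2 * k) (fun j => rfl),
        nfM_Dm _ _ (fun j _ => le_refl _)]
    rw [hq, if_pos rfl] at h0
    have hp : gmap (n - 1) (∑ j : Fin m, Finsupp.single (J j) 2) = List.range (2 * m) := by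
      by_contra hne
      rw [if_neg hne] at h0
      exact absurd h0 (by decide)
    rw [gmap, key_multiset (n - 1) m J a ha] at hp
    intro j
    refine ⟨hlow j.val j.isLt, ?_⟩
    by_contra hgt
    exact nfM_Dm_ne a m j.val j.isLt hmono (by rw [ha j]; omega) hp
  · -- backward
    intro hcond
    rw [mk_sq (n - 1) m J a ha, mk_sq (n - 1) m _ (fun k => 2 * k) (fun j => rfl),
      phi_nfM (n - 1) (Dm a m), phi_nfM (n - 1) (Dm (fun k => 2 * k) m),
      nfM_Dm a m (fun j hj => by
        simp only [haDef]
        rw [dif_pos hj]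
        exact (hcond ⟨j, hj⟩).2),
      nfM_Dm (fun k => 2 * k) m (fun j _ => le_refl _)]
end
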